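/- Let F = FreeAlgebra ℚ Γ be the free associative ℚ-algebra on Γ = {e1, e11, e2, e22, e12}, with dual-basis functionals f_w attached to words w as above, let 𝔞 ⊆ L(Γ) ⊆ F be the kernel of the canonical surjection from the free Lie algebra L(Γ) onto L^PL, and let I be the two-sided associative ideal of F generated by the image of 𝔞. Then each of the linear functionals f_{e1}, f_{e2}, f_{e11·e1^n}, f_{e22·e2^n}, f_{e12·(e1+e2)^n} (for every natural number n) vanishes identically on I. -/

import Mathlib

inductive Gamma : Type
  | e1 | e11 | e2 | e22 | e12
deriving DecidableEq

noncomputable section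

abbrev FL : Type := FreeLieAlgebra ℚ Gamma

/-- The five generators of the free Lie algebra. -/
def gen (x : Gamma) : FL := FreeLieAlgebra.of ℚ x

/-- The defining relations of the Lie algebra `L`. -/
def relSet : Set FL :=
  {⁅gen .e1, gen .e2⁆, ⁅gen .e11, gen .e2⁆, ⁅gen .e1, gen .e22⁆,
   ⁅gen .e11, gen .e22⁆ - ⁅gen .e2 - gen .e1, gen .e12⁆,
   (-⁅gen .e11, gen .e12⁆) - ⁅gen .e2 - gen .e1, gen .e12⁆,
   ⁅gen .e22, gen .e12⁆ - ⁅gen .e2 - gen .e1, gen .e12⁆}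

/-- The Lie ideal generated by the relations. -/
def relIdeal : LieIdeal ℚ FL := LieSubmodule.lieSpan ℚ FL relSet

/-- The Lie algebra `L`. -/
abbrev Lquot : Type := FL ⧸ relIdeal

/-- Projection `L(Γ) → L`. -/
def mkL : FL → Lquot := LieSubmodule.Quotient.mk (N := relIdeal)

/-- The Lie ideal `N` of `L` generated by `e11`, `e22`, `e12`. -/
def NIdeal : LieIdeal ℚ Lquot :=
  LieSubmodule.lieSpan ℚ Lquot {mkL (gen .e11), mkL (gen .e22), mkL (gen .e12)}

/-- The Lie ideal `[N, N]`. -/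
def NN : LieIdeal ℚ Lquot := ⁅NIdeal, NIdeal⁆

/-- The polylogarithmic Lie algebra `L^PL = L/[N,N]`. -/
abbrev LPL : Type := Lquot ⧸ NN

/-- Projection `L(Γ) → L^PL`. -/
def pl (x : FL) : LPL := LieSubmodule.Quotient.mk (N := NN) (mkL x)

def E1 : LPL := pl (gen .e1)
def E11 : LPL := pl (gen .e11)
def E2 : LPL := pl (gen .e2)
def E22 : LPL := pl (gen .e22)
def E12 : LPL := pl (gen .e12)

/-- The adjoint action `ad z : w ↦ ⁅z, w⁆` as a linear endomorphism of `L^PL`. -/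
def adPL (z : LPL) : Module.End ℚ LPL := LieAlgebra.ad ℚ LPL z

end
noncomputable section

/-- The free associative ℚ-algebra on `Γ`. -/
abbrev FA : Type := FreeAlgebra ℚ Gamma

/-- The generators of the free algebra. -/
def ga (x : Gamma) : FA := FreeAlgebra.ι ℚ x

attribute [local instance 100] LieRing.ofAssociativeRing

/-- The embedding of the free Lie algebra into the free associative algebra, via the
commutator bracket. -/
def toFA : FL →ₗ⁅ℚ⁆ FA := (FreeLieAlgebra.lift ℚ) fun x => FreeAlgebra.ι ℚ x

/-- The basis of words of the free algebra. -/
def W : Module.Basis (FreeMonoid Gamma) ℚ FA := FreeAlgebra.basisFreeMonoid ℚ Gamma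

/-- The pairing `⟨a, y⟩ = ∑_w (coefficient of the word `w` in `a`) · f_w(y)`; for `a` a single
word `w`, this is the dual-basis functional `f_w` applied to `y`, and it is extended linearly
in the subscript `a`. -/
def pair (a y : FA) : ℚ := (W.repr a).sum fun w c => c * W.repr y w

/-- The adjoint action on the free Lie algebra. -/
def adF (z : FL) : Module.End ℚ FL := LieAlgebra.ad ℚ FL z

end
noncomputable section

/-- The kernel of the canonical surjection `L(Γ) → L^PL`, viewed as a subset of the free
associative algebra via the commutator embedding. -/
def kerSet : Set FA := toFA '' {x : FL | pl x = 0}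

/-- The two-sided associative ideal of `FA` generated by the image of `𝔞`. -/
def I : TwoSidedIdeal FA := TwoSidedIdeal.span kerSet

end

attribute [local instance 100] LieRing.ofAssociativeRing

noncomputable section AuxPL

open Finsupp FreeMonoid

/-- State space of the automaton: `(j, false)` are counting states, `(j, true)` accepting. -/
abbrev VS : Type := (ℕ × Bool) →₀ ℚ

/-- Shift operator. -/
def shOp : Module.End ℚ VS :=
  Finsupp.lsum ℚ fun p => if p.2 then 0 else Finsupp.lsingle (p.1 + 1, false)

/-- Cap operator. -/
def capOp : Module.End ℚ VS :=
  Finsupp.lsum ℚ fun p => if p.2 then 0 else Finsupp.lsingle (p.1, true)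

@[simp] lemma shOp_false (j : ℕ) (c : ℚ) :
    shOp (Finsupp.single (j, false) c) = Finsupp.single (j + 1, false) c := by
  simp [shOp]

@[simp] lemma shOp_true (j : ℕ) (c : ℚ) : shOp (Finsupp.single (j, true) c) = 0 := by
  simp [shOp]

@[simp] lemma capOp_false (j : ℕ) (c : ℚ) :
    capOp (Finsupp.single (j, false) c) = Finsupp.single (j, true) c := by
  simp [capOp]

@[simp] lemma capOp_true (j : ℕ) (c : ℚ) : capOp (Finsupp.single (j, true) c) = 0 := by
  simp [capOp]

/-- The abelian space of "final" operators. -/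
def MM : Submodule ℚ (Module.End ℚ VS) where
  carrier := {T | (∀ j : ℕ, T (Finsupp.single (j, true) 1) = 0) ∧
    ∀ (v : VS) (j : ℕ), T v (j, false) = 0}
  add_mem' := by
    rintro a b ⟨ha1, ha2⟩ ⟨hb1, hb2⟩
    exact ⟨fun j => by simp [ha1 j, hb1 j], fun v j => by simp [ha2 v j, hb2 v j]⟩
  zero_mem' := by constructor <;> simp
  smul_mem' := by
    rintro c T ⟨h1, h2⟩
    exact ⟨fun j => by simp [h1 j], fun v j => by simp [h2 v j]⟩

lemma killsupp (A : Module.End ℚ VS) (hA : ∀ j, A (Finsupp.single (j, true) 1) = 0)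
    (u : VS) (hu : ∀ j, u (j, false) = 0) : A u = 0 := by
  have h1 : u = u.sum fun p c => Finsupp.single p c := (Finsupp.sum_single u).symm
  rw [h1, map_finsuppSum]
  refine Finset.sum_eq_zero ?_
  rintro ⟨j, b⟩ hp
  dsimp only
  cases b
  · have : u (j, false) = 0 := hu j
    simp [this]
  · have : Finsupp.single ((j, true) : ℕ × Bool) (u (j, true)) =
      (u (j, true)) • Finsupp.single ((j, true) : ℕ × Bool) (1 : ℚ) := by
      simp [Finsupp.smul_single]
    rw [this, map_smul, hA j, smul_zero]

lemma mm_lie_zero {T1 T2 : Module.End ℚ VS} (h1 : T1 ∈ MM) (h2 : T2 ∈ MM) : ⁅T1, T2⁆ = 0 := by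
  obtain ⟨h11, h12⟩ := h1
  obtain ⟨h21, h22⟩ := h2
  apply LinearMap.ext
  intro v
  simp only [Ring.lie_def, LinearMap.sub_apply, Module.End.mul_apply, LinearMap.zero_apply]
  rw [killsupp T1 h11 (T2 v) (fun j => h22 v j), killsupp T2 h21 (T1 v) (fun j => h12 v j),
    sub_zero]

lemma mm_invariant {A : Module.End ℚ VS} (hA : ∀ j, A (Finsupp.single (j, true) 1) = 0)
    {T : Module.End ℚ VS} (hT : T ∈ MM) : ⁅A, T⁆ ∈ MM := by
  obtain ⟨hT1, hT2⟩ := hT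
  constructor
  · intro j
    simp only [Ring.lie_def, LinearMap.sub_apply, Module.End.mul_apply]
    rw [hT1 j, hA j, map_zero, map_zero, sub_zero]
  · intro v j
    simp only [Ring.lie_def, LinearMap.sub_apply, Module.End.mul_apply, Finsupp.sub_apply]
    rw [killsupp A hA (T v) (fun i => hT2 v i), hT2 (A v) j]
    simp

lemma capOp_mem : capOp ∈ MM := by
  constructor
  · intro j; simp
  · intro v j
    rw [show capOp v = v.sum fun p c => capOp (Finsupp.single p c) by
      conv_lhs => rw [← Finsupp.sum_single v, map_finsuppSum]]
    rw [Finsupp.sum_apply]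
    apply Finset.sum_eq_zero
    rintro ⟨i, b⟩ hp
    cases b <;> simp [Finsupp.single_apply]

lemma zero_mem_MM : (0 : Module.End ℚ VS) ∈ MM := MM.zero_mem

end AuxPL

noncomputable section Rep

open Finsupp FreeMonoid

variable (L : List Gamma) (cap : Gamma)

/-- The operator attached to each generator. -/
def opOf (c : Gamma) : Module.End ℚ VS :=
  if c ∈ L then shOp else if c = cap then capOp else 0

/-- The representation of the free algebra. -/
def rho : FA →ₐ[ℚ] Module.End ℚ VS := FreeAlgebra.lift ℚ (opOf L cap)

/-- The corresponding representation of the free Lie algebra. -/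
def psi : FL →ₗ⁅ℚ⁆ Module.End ℚ VS := ((rho L cap).toLieHom).comp toFA

@[simp] lemma rho_ga (c : Gamma) : rho L cap (ga c) = opOf L cap c := by
  rw [rho, ga]
  exact FreeAlgebra.lift_ι_apply _ _

@[simp] lemma psi_gen (c : Gamma) : psi L cap (gen c) = opOf L cap c := by
  simp only [psi, toFA, gen, LieHom.comp_apply, FreeLieAlgebra.lift_of_apply, AlgHom.toLieHom_apply]
  exact rho_ga L cap c

lemma opOf_true (c : Gamma) (j : ℕ) (d : ℚ) :
    opOf L cap c (Finsupp.single (j, true) d) = 0 := by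
  unfold opOf
  split_ifs <;> simp

/-- Every element of the free Lie algebra acts by operators killing accepting states. -/
lemma psi_true (z : FL) (j : ℕ) : psi L cap z (Finsupp.single (j, true) 1) = 0 := by
  let S : LieSubalgebra ℚ FL :=
    { carrier := {z | ∀ j : ℕ, psi L cap z (Finsupp.single (j, true) 1) = 0}
      add_mem' := fun ha hb => fun i => by simp [ha i, hb i]
      zero_mem' := fun i => by simp
      smul_mem' := fun c x hx => fun i => by simp [hx i]
      lie_mem' := fun {x y} hx hy => fun i => by
        simp only [Set.mem_setOf_eq] at hx hy ⊢
        rw [LieHom.map_lie]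
        simp only [Ring.lie_def, LinearMap.sub_apply, Module.End.mul_apply]
        rw [hx i, hy i, map_zero, map_zero, sub_zero] }
  have hgen : ∀ c, FreeLieAlgebra.of ℚ c ∈ S := by
    intro c i
    show psi L cap (gen c) _ = 0
    rw [psi_gen]
    exact opOf_true L cap c i 1
  -- generation argument
  have hz : ∀ z : FL, z ∈ S := by
    intro z
    let f : FL →ₗ⁅ℚ⁆ S := FreeLieAlgebra.lift ℚ fun c => ⟨FreeLieAlgebra.of ℚ c, hgen c⟩
    have key : S.incl.comp f = LieHom.id := by
      apply FreeLieAlgebra.hom_ext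
      intro c
      simp [f, FreeLieAlgebra.lift_of_apply, LieSubalgebra.coe_incl]
    have : S.incl (f z) = z := by
      rw [show S.incl (f z) = (S.incl.comp f) z from rfl, key]; rfl
    exact this ▸ (f z).2
  exact hz z j

end Rep
noncomputable section Descent

variable (L : List Gamma) (cap : Gamma)

variable (hrel : relIdeal ≤ (psi L cap).ker)

/-- The representation descends to `Lquot`. -/
def Lbar : Lquot →ₗ[ℚ] Module.End ℚ VS :=
  Submodule.liftQ relIdeal.toSubmodule (psi L cap).toLinearMap
    (fun x hx => LinearMap.mem_ker.mpr ((LieHom.mem_ker).mp (hrel hx)))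

@[simp] lemma Lbar_mk (x : FL) : Lbar L cap hrel (mkL x) = psi L cap x := rfl

lemma Lbar_surj (u : Lquot) : ∃ x : FL, mkL x = u := by
  obtain ⟨x, hx⟩ := Submodule.Quotient.mk_surjective relIdeal.toSubmodule u
  exact ⟨x, hx⟩

lemma Lbar_bracket (u v : Lquot) :
    Lbar L cap hrel ⁅u, v⁆ = ⁅Lbar L cap hrel u, Lbar L cap hrel v⁆ := by
  obtain ⟨x, rfl⟩ := Lbar_surj u
  obtain ⟨y, rfl⟩ := Lbar_surj v
  have h : (⁅mkL x, mkL y⁆ : Lquot) = mkL ⁅x, y⁆ :=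
    (LieSubmodule.Quotient.mk_bracket (I := relIdeal) x y).symm
  rw [h, Lbar_mk, Lbar_mk, Lbar_mk, LieHom.map_lie]

lemma Lbar_true (u : Lquot) (j : ℕ) :
    Lbar L cap hrel u (Finsupp.single (j, true) 1) = 0 := by
  obtain ⟨x, rfl⟩ := Lbar_surj u
  rw [Lbar_mk]
  exact psi_true L cap x j

/-- Preimage of `MM` as a Lie ideal of `Lquot`. -/
def MZbar : LieIdeal ℚ Lquot :=
  { MM.comap (Lbar L cap hrel) with
    lie_mem := by
      intro x m hm
      show Lbar L cap hrel ⁅x, m⁆ ∈ MM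
      rw [Lbar_bracket]
      exact mm_invariant (Lbar_true L cap hrel x) hm }

/-- Kernel of `Lbar` as a Lie ideal of `Lquot`. -/
def Zbar : LieIdeal ℚ Lquot :=
  { LinearMap.ker (Lbar L cap hrel) with
    lie_mem := by
      intro x m hm
      show Lbar L cap hrel ⁅x, m⁆ = 0
      rw [Lbar_bracket, LinearMap.mem_ker.mp hm, lie_zero] }

variable (hN : opOf L cap .e11 ∈ MM ∧ opOf L cap .e22 ∈ MM ∧ opOf L cap .e12 ∈ MM)

include hrel hN in
lemma NIdeal_le : NIdeal ≤ MZbar L cap hrel := by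
  rw [NIdeal, LieSubmodule.lieSpan_le]
  intro u hu
  simp only [Set.mem_insert_iff, Set.mem_singleton_iff] at hu
  rcases hu with rfl | rfl | rfl <;>
    · show Lbar L cap hrel (mkL _) ∈ MM
      rw [Lbar_mk, psi_gen]
      first
        | exact hN.1
        | exact hN.2.1
        | exact hN.2.2

include hrel hN in
lemma NN_le : NN ≤ Zbar L cap hrel := by
  rw [NN, LieSubmodule.lieIdeal_oper_eq_span, LieSubmodule.lieSpan_le]
  rintro m ⟨⟨x, hx⟩, ⟨n, hn⟩, rfl⟩
  show Lbar L cap hrel ⁅x, n⁆ = 0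
  rw [Lbar_bracket]
  exact mm_lie_zero (NIdeal_le L cap hrel hN hx) (NIdeal_le L cap hrel hN hn)

include hrel hN in
lemma psi_of_pl_zero (x : FL) (hx : pl x = 0) : psi L cap x = 0 := by
  have h1 : mkL x ∈ NN := by
    rwa [pl, LieSubmodule.Quotient.mk_eq_zero'] at hx
  have h2 : Lbar L cap hrel (mkL x) = 0 := NN_le L cap hrel hN h1
  rwa [Lbar_mk] at h2

include hrel hN in
lemma rho_vanish_I (y : FA) (hy : y ∈ I) : rho L cap y = 0 := by
  have hk : kerSet ⊆ (TwoSidedIdeal.ker (rho L cap) : Set FA) := by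
    rintro _ ⟨x, hx, rfl⟩
    rw [SetLike.mem_coe, TwoSidedIdeal.mem_ker]
    exact psi_of_pl_zero L cap hrel hN x hx
  exact (TwoSidedIdeal.mem_ker _).mp (TwoSidedIdeal.mem_span_iff.mp hy _ hk)

end Descent
noncomputable section Words

open Finsupp FreeMonoid

/-- Abbreviation for the monoid-algebra model. -/
abbrev MA : Type := MonoidAlgebra ℚ (FreeMonoid Gamma)

def EE : FA ≃ₐ[ℚ] MA := FreeAlgebra.equivMonoidAlgebraFreeMonoid (R := ℚ) (X := Gamma)

lemma EE_ga (c : Gamma) : EE (ga c) = MonoidAlgebra.single (FreeMonoid.of c) (1 : ℚ) := by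
  simp [EE, FreeAlgebra.equivMonoidAlgebraFreeMonoid, ga, FreeAlgebra.lift_ι_apply,
    MonoidAlgebra.of_apply]

lemma W_repr (y : FA) (w : FreeMonoid Gamma) : W.repr y w = (EE y).coeff w := by
  rfl

lemma W_apply (w : FreeMonoid Gamma) : W w = EE.symm (MonoidAlgebra.single w 1) := by
  rfl

lemma W_one : W (1 : FreeMonoid Gamma) = 1 := by
  rw [W_apply, ← MonoidAlgebra.one_def, map_one]

lemma W_cons (c : Gamma) (w : FreeMonoid Gamma) : W (FreeMonoid.of c * w) = ga c * W w := by
  rw [W_apply, W_apply]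
  have h : (MonoidAlgebra.single (FreeMonoid.of c * w) (1 : ℚ) : MA) =
      MonoidAlgebra.single (FreeMonoid.of c) 1 * MonoidAlgebra.single w 1 := by
    rw [MonoidAlgebra.single_mul_single, one_mul]
  rw [h, map_mul, ← EE_ga, AlgEquiv.symm_apply_apply]

end Words

noncomputable section States

open Finsupp FreeMonoid

variable (L : List Gamma) (cap : Gamma)

/-- The state reached by the automaton after reading a word (right to left). -/
def stVec : List Gamma → VS
  | [] => Finsupp.single ((0 : ℕ), false) (1 : ℚ)
  | c :: l =>
    if ∀ x ∈ l, x ∈ L then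
      (if c ∈ L then Finsupp.single (l.length + 1, false) 1
       else if c = cap then Finsupp.single (l.length, true) 1 else 0)
    else 0

lemma stVec_all {l : List Gamma} (h : ∀ x ∈ l, x ∈ L) :
    stVec L cap l = Finsupp.single (l.length, false) 1 := by
  cases l with
  | nil => rfl
  | cons c l' =>
    have hc : c ∈ L := h c (by simp)
    have hl' : ∀ x ∈ l', x ∈ L := fun x hx => h x (by simp [hx])
    show stVec L cap (c :: l') = _
    simp only [stVec]
    rw [if_pos hl', if_pos hc, List.length_cons]

lemma stVec_step (c : Gamma) (l : List Gamma) :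
    opOf L cap c (stVec L cap l) = stVec L cap (c :: l) := by
  by_cases h : ∀ x ∈ l, x ∈ L
  · rw [stVec_all L cap h]
    simp only [stVec]
    rw [if_pos h]
    unfold opOf
    by_cases hc : c ∈ L
    · rw [if_pos hc, if_pos hc, shOp_false]
    · rw [if_neg hc, if_neg hc]
      by_cases hcc : c = cap
      · rw [if_pos hcc, if_pos hcc, capOp_false]
      · rw [if_neg hcc, if_neg hcc, LinearMap.zero_apply]
  · have h0 : stVec L cap (c :: l) = 0 := by simp [stVec, h]
    rw [h0]
    cases l with
    | nil => exact absurd (by simp) h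
    | cons c' l' =>
      simp only [stVec]
      by_cases h' : ∀ x ∈ l', x ∈ L
      · rw [if_pos h']
        have hc' : c' ∉ L := fun hc' => h (by
          intro x hx
          rcases List.mem_cons.mp hx with rfl | hx
          · exact hc'
          · exact h' x hx)
        rw [if_neg hc']
        by_cases hcc : c' = cap
        · rw [if_pos hcc]
          exact opOf_true L cap c _ _
        · rw [if_neg hcc, map_zero]
      · rw [if_neg h', map_zero]

def q0 : VS := Finsupp.single ((0 : ℕ), false) (1 : ℚ)

lemma state_eq (w : FreeMonoid Gamma) :
    rho L cap (W w) q0 = stVec L cap (FreeMonoid.toList w) := by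
  induction w using FreeMonoid.recOn with
  | one =>
    rw [W_one, map_one]
    rfl
  | of_mul c w ih =>
    rw [W_cons, map_mul, Module.End.mul_apply, ih, rho_ga, stVec_step L cap c,
      FreeMonoid.toList_of_mul]

end States
noncomputable section Coeffs

open Finsupp FreeMonoid

def Xsh (L : List Gamma) : MA :=
  (L.map fun c => MonoidAlgebra.single (FreeMonoid.of c) (1 : ℚ)).sum

lemma EE_shSum (L : List Gamma) : EE ((L.map ga).sum) = Xsh L := by
  induction L with
  | nil => simp [Xsh]
  | cons c L ih =>
    simp only [Xsh, List.map_cons, List.sum_cons, map_add, EE_ga] at ih ⊢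
    rw [ih]

lemma single_mul_coeff (c : Gamma) (f : MA) (w : FreeMonoid Gamma) :
    (MonoidAlgebra.single (FreeMonoid.of c) (1 : ℚ) * f).coeff w =
      (FreeMonoid.toList w).head?.elim 0
        (fun c' => if c' = c then f.coeff (FreeMonoid.ofList (FreeMonoid.toList w).tail) else 0) := by
  induction w using FreeMonoid.recOn with
  | one =>
    rw [MonoidAlgebra.single_mul_apply_of_not_exists_mul]
    · simp [FreeMonoid.toList_one]
    · rintro ⟨d, hd⟩
      have h := congrArg FreeMonoid.toList hd
      rw [FreeMonoid.toList_of_mul, FreeMonoid.toList_one] at h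
      exact List.cons_ne_nil _ _ h.symm
  | of_mul c' w _ =>
    by_cases hc : c' = c
    · subst hc
      have H : ∀ a, FreeMonoid.of c' * a = FreeMonoid.of c' * w ↔ a = w :=
        fun a => ⟨fun h => mul_left_cancel h, fun h => by rw [h]⟩
      rw [MonoidAlgebra.coeff_single_mul_eq_mul_coeff (x := f) w (fun a _ => H a), one_mul]
      simp [FreeMonoid.toList_of_mul, FreeMonoid.ofList_toList]
    · rw [MonoidAlgebra.single_mul_apply_of_not_exists_mul]
      · simp [FreeMonoid.toList_of_mul, hc]
      · rintro ⟨d, hd⟩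
        have h := congrArg FreeMonoid.toList hd
        rw [FreeMonoid.toList_of_mul, FreeMonoid.toList_of_mul] at h
        exact hc (List.head_eq_of_cons_eq h)

lemma Xsh_mul_coeff (L : List Gamma) (hnd : L.Nodup) (f : MA) (w : FreeMonoid Gamma) :
    (Xsh L * f).coeff w =
      (FreeMonoid.toList w).head?.elim 0
        (fun c' => if c' ∈ L then f.coeff (FreeMonoid.ofList (FreeMonoid.toList w).tail) else 0) := by
  induction L with
  | nil =>
    show ((0 : MA) * f).coeff w = _
    rw [zero_mul]
    cases (FreeMonoid.toList w).head? <;> simp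
  | cons c L ih =>
    obtain ⟨hc, hnd'⟩ := List.nodup_cons.mp hnd
    have hx : Xsh (c :: L) = MonoidAlgebra.single (FreeMonoid.of c) (1 : ℚ) + Xsh L := by
      simp [Xsh]
    rw [hx, add_mul, MonoidAlgebra.coeff_add, Finsupp.add_apply, single_mul_coeff, ih hnd']
    cases h : (FreeMonoid.toList w).head? with
    | none => simp
    | some c' =>
      simp only [Option.elim]
      by_cases hcc : c' = c
      · subst hcc
        have : c' ∉ L := hc
        simp [this]
      · simp [hcc, List.mem_cons]

lemma Xsh_pow_coeff (L : List Gamma) (hnd : L.Nodup) (n : ℕ) :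
    ∀ u : FreeMonoid Gamma, (Xsh L ^ n).coeff u =
      if (∀ x ∈ FreeMonoid.toList u, x ∈ L) ∧ (FreeMonoid.toList u).length = n then 1 else 0 := by
  induction n with
  | zero =>
    intro u
    classical
    rw [pow_zero, MonoidAlgebra.one_def]
    by_cases hu : u = 1
    · subst hu
      simp [MonoidAlgebra.coeff_single, Finsupp.single_apply, FreeMonoid.toList_one]
    · have h1 : FreeMonoid.toList u ≠ [] := by
        intro h
        exact hu (FreeMonoid.toList.injective (by rw [h, FreeMonoid.toList_one]))
      rw [MonoidAlgebra.coeff_single, Finsupp.single_apply, if_neg (fun h => hu h.symm), if_neg]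
      rintro ⟨-, h2⟩
      exact h1 (List.length_eq_zero_iff.mp h2)
  | succ n ih =>
    intro u
    rw [pow_succ', Xsh_mul_coeff L hnd]
    induction u using FreeMonoid.recOn with
    | one =>
      rw [FreeMonoid.toList_one]
      simp
    | of_mul c w _ =>
      rw [FreeMonoid.toList_of_mul]
      simp only [List.head?_cons, Option.elim, List.tail_cons, FreeMonoid.ofList_toList]
      by_cases hcL : c ∈ L
      · rw [if_pos hcL, ih w]
        by_cases h1 : (∀ x ∈ FreeMonoid.toList w, x ∈ L) ∧ (FreeMonoid.toList w).length = n
        · rw [if_pos h1, if_pos]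
          refine ⟨fun x hx => ?_, by simp [h1.2]⟩
          rcases List.mem_cons.mp hx with rfl | hx
          · exact hcL
          · exact h1.1 x hx
        · rw [if_neg h1, if_neg]
          rintro ⟨ha, hl⟩
          exact h1 ⟨fun x hx => ha x (List.mem_cons_of_mem c hx),
            by simpa using hl⟩
      · rw [if_neg hcL, if_neg]
        rintro ⟨ha, -⟩
        exact hcL (ha c List.mem_cons_self)

/-- Indicator of the words `cap · (shift letters)^n`. -/
def TT (L : List Gamma) (cap : Gamma) (n : ℕ) : List Gamma → ℚ
  | [] => 0
  | c :: l' => if c = cap ∧ (∀ x ∈ l', x ∈ L) ∧ l'.length = n then 1 else 0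

lemma stVec_coeff (L : List Gamma) (cap : Gamma) (hcap : cap ∉ L) (n : ℕ) (l : List Gamma) :
    stVec L cap l (n, true) = TT L cap n l := by
  cases l with
  | nil => simp [stVec, TT, Finsupp.single_apply]
  | cons c l' =>
    show stVec L cap (c :: l') (n, true) = _
    simp only [stVec, TT]
    by_cases h : ∀ x ∈ l', x ∈ L
    · rw [if_pos h]
      by_cases hc : c ∈ L
      · rw [if_pos hc]
        have hne : c ≠ cap := fun e => hcap (e ▸ hc)
        rw [Finsupp.single_apply, if_neg (by simp), if_neg (by tauto)]
      · rw [if_neg hc]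
        by_cases hcc : c = cap
        · rw [if_pos hcc, Finsupp.single_apply]
          by_cases hl : l'.length = n
          · rw [if_pos (by simp [hl]), if_pos ⟨hcc, h, hl⟩]
          · rw [if_neg (by simp [hl]), if_neg (by tauto)]
        · rw [if_neg hcc, if_neg (by tauto), Finsupp.zero_apply]
    · rw [if_neg h, if_neg (by tauto), Finsupp.zero_apply]

lemma EE_coeff (L : List Gamma) (cap : Gamma) (hnd : L.Nodup) (n : ℕ)
    (w : FreeMonoid Gamma) :
    (EE (ga cap * (L.map ga).sum ^ n)).coeff w = TT L cap n (FreeMonoid.toList w) := by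
  rw [map_mul, map_pow, EE_ga, EE_shSum, single_mul_coeff]
  induction w using FreeMonoid.recOn with
  | one => simp [FreeMonoid.toList_one, TT]
  | of_mul c w _ =>
    rw [FreeMonoid.toList_of_mul]
    simp only [List.head?_cons, Option.elim, List.tail_cons, FreeMonoid.ofList_toList, TT]
    by_cases hc : c = cap
    · rw [if_pos hc, Xsh_pow_coeff L hnd]
      by_cases h1 : (∀ x ∈ FreeMonoid.toList w, x ∈ L) ∧ (FreeMonoid.toList w).length = n
      · rw [if_pos h1, if_pos ⟨hc, h1⟩]
      · rw [if_neg h1, if_neg (by tauto)]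
    · rw [if_neg hc, if_neg (by tauto)]

end Coeffs

noncomputable section Final

open Finsupp FreeMonoid

def pairLM (a : FA) : FA →ₗ[ℚ] ℚ where
  toFun y := pair a y
  map_add' y z := by
    simp [pair, Finsupp.sum, map_add, Finsupp.add_apply, mul_add, Finset.sum_add_distrib]
  map_smul' r y := by
    simp [pair, Finsupp.sum, map_smul, Finsupp.smul_apply, Finset.mul_sum, smul_eq_mul,
      mul_left_comm]

def evalLM (L : List Gamma) (cap : Gamma) (n : ℕ) : FA →ₗ[ℚ] ℚ where
  toFun y := rho L cap y q0 (n, true)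
  map_add' y z := by simp
  map_smul' r y := by simp

lemma pair_basis (a : FA) (w : FreeMonoid Gamma) : pair a (W w) = W.repr a w := by
  classical
  unfold pair
  rw [Module.Basis.repr_self]
  simp only [Finsupp.single_apply, mul_ite, mul_one, mul_zero]
  exact Finsupp.sum_ite_self_eq _ w

lemma key_pair (L : List Gamma) (cap : Gamma) (hnd : L.Nodup) (hcap : cap ∉ L) (n : ℕ)
    (y : FA) :
    pair (ga cap * (L.map ga).sum ^ n) y = rho L cap y q0 (n, true) := by
  have h : pairLM (ga cap * (L.map ga).sum ^ n) = evalLM L cap n := by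
    apply Module.Basis.ext W
    intro w
    show pair _ (W w) = rho L cap (W w) q0 (n, true)
    rw [pair_basis, W_repr, state_eq, stVec_coeff L cap hcap, EE_coeff L cap hnd]
  exact LinearMap.congr_fun h y

lemma main_vanish (L : List Gamma) (cap : Gamma) (hnd : L.Nodup) (hcap : cap ∉ L)
    (hrel : relIdeal ≤ (psi L cap).ker)
    (hN : opOf L cap .e11 ∈ MM ∧ opOf L cap .e22 ∈ MM ∧ opOf L cap .e12 ∈ MM)
    (n : ℕ) (y : FA) (hy : y ∈ I) :
    pair (ga cap * (L.map ga).sum ^ n) y = 0 := by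
  rw [key_pair L cap hnd hcap, rho_vanish_I L cap hrel hN y hy]
  rfl

end Final
noncomputable section Instances

lemma hrel_gen (L : List Gamma) (cap : Gamma)
    (h1 : ⁅opOf L cap .e1, opOf L cap .e2⁆ = 0)
    (h2 : ⁅opOf L cap .e11, opOf L cap .e2⁆ = 0)
    (h3 : ⁅opOf L cap .e1, opOf L cap .e22⁆ = 0)
    (h4 : ⁅opOf L cap .e11, opOf L cap .e22⁆
        - ⁅opOf L cap .e2 - opOf L cap .e1, opOf L cap .e12⁆ = 0)
    (h5 : -⁅opOf L cap .e11, opOf L cap .e12⁆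
        - ⁅opOf L cap .e2 - opOf L cap .e1, opOf L cap .e12⁆ = 0)
    (h6 : ⁅opOf L cap .e22, opOf L cap .e12⁆
        - ⁅opOf L cap .e2 - opOf L cap .e1, opOf L cap .e12⁆ = 0) :
    relIdeal ≤ (psi L cap).ker := by
  rw [relIdeal, LieSubmodule.lieSpan_le]
  intro r hr
  rw [SetLike.mem_coe, LieHom.mem_ker]
  simp only [relSet, Set.mem_insert_iff, Set.mem_singleton_iff] at hr
  rcases hr with rfl | rfl | rfl | rfl | rfl | rfl <;>
    simp only [LieHom.map_lie, map_sub, map_neg, psi_gen] <;>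
    first
      | exact h1 | exact h2 | exact h3 | exact h4 | exact h5 | exact h6

lemma inst1 (y : FA) (hy : y ∈ I) : pair (ga .e1) y = 0 := by
  have h := main_vanish [] .e1 (by simp) (by simp)
    (hrel_gen _ _ (by simp [opOf]) (by simp [opOf]) (by simp [opOf]) (by simp [opOf])
      (by simp [opOf]) (by simp [opOf]))
    ⟨by simp [opOf, MM.zero_mem], by simp [opOf, MM.zero_mem], by simp [opOf, MM.zero_mem]⟩
    0 y hy
  simpa using h

lemma inst2 (y : FA) (hy : y ∈ I) : pair (ga .e2) y = 0 := by
  have h := main_vanish [] .e2 (by simp) (by simp)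
    (hrel_gen _ _ (by simp [opOf]) (by simp [opOf]) (by simp [opOf]) (by simp [opOf])
      (by simp [opOf]) (by simp [opOf]))
    ⟨by simp [opOf, MM.zero_mem], by simp [opOf, MM.zero_mem], by simp [opOf, MM.zero_mem]⟩
    0 y hy
  simpa using h

lemma inst3 (n : ℕ) (y : FA) (hy : y ∈ I) : pair (ga .e11 * ga .e1 ^ n) y = 0 := by
  have h := main_vanish [.e1] .e11 (by simp) (by simp)
    (hrel_gen _ _ (by simp [opOf]) (by simp [opOf]) (by simp [opOf]) (by simp [opOf])
      (by simp [opOf]) (by simp [opOf]))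
    ⟨by simp [opOf, capOp_mem], by simp [opOf, MM.zero_mem], by simp [opOf, MM.zero_mem]⟩
    n y hy
  simpa using h

lemma inst4 (n : ℕ) (y : FA) (hy : y ∈ I) : pair (ga .e22 * ga .e2 ^ n) y = 0 := by
  have h := main_vanish [.e2] .e22 (by simp) (by simp)
    (hrel_gen _ _ (by simp [opOf]) (by simp [opOf]) (by simp [opOf]) (by simp [opOf])
      (by simp [opOf]) (by simp [opOf]))
    ⟨by simp [opOf, MM.zero_mem], by simp [opOf, capOp_mem], by simp [opOf, MM.zero_mem]⟩
    n y hy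
  simpa using h

lemma inst5 (n : ℕ) (y : FA) (hy : y ∈ I) :
    pair (ga .e12 * (ga .e1 + ga .e2) ^ n) y = 0 := by
  have h := main_vanish [.e1, .e2] .e12 (by simp) (by simp)
    (hrel_gen _ _ (by simp [opOf]) (by simp [opOf]) (by simp [opOf]) (by simp [opOf])
      (by simp [opOf]) (by simp [opOf]))
    ⟨by simp [opOf, MM.zero_mem], by simp [opOf, MM.zero_mem], by simp [opOf, capOp_mem]⟩
    n y hy
  simpa using h

end Instances

theorem stmt13 (y : FA) (hy : y ∈ I) :
    pair (ga .e1) y = 0 ∧ pair (ga .e2) y = 0 ∧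
    ∀ n : ℕ,
      pair (ga .e11 * ga .e1 ^ n) y = 0 ∧
      pair (ga .e22 * ga .e2 ^ n) y = 0 ∧
      pair (ga .e12 * (ga .e1 + ga .e2) ^ n) y = 0 :=
  ⟨inst1 y hy, inst2 y hy, fun n => ⟨inst3 n y hy, inst4 n y hy, inst5 n y hy⟩⟩
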